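/- Let D be an o-stable bimolecular CRD. If x ∈ min(U) with ‖x‖ = k, then for every l with 2 ≤ l ≤ k there exists y ∈ min(U) with ‖y‖ = l. Consequently, min(U) cannot equal the full antichain C_{=k} of all configurations of size k for any k ≥ 3. -/

import Mathlib

/-! The heart is a descent: every `x ∈ min(U)` with `‖x‖ ≥ 3` has some `z ∈ min(U)` with
`‖z‖ = ‖x‖ - 1`. Such an `x` has a defined output (two opposite voters would already form an
unstable configuration of size 2 below `x`), and some run from `x` changes it. Along this run the
output stays the same or becomes undefined, because the `‖a‖ - 2 ≥ 1` molecules not consumed by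
a step `a → a'` are shared. Hence the first configuration `a'` of the run outside `min(U)` is
unstable and lies above some `z ∈ min(U)`, `z ≠ a'`. Minimality of its predecessor `a` gives
`‖z‖ ≥ ‖a‖ - 1`: running the reaction `r → p` backwards from `z` yields the unstable
configuration `z - p + r ≤ a`, hence equal to `a`, and `z` must contain a product molecule.
Iterating the descent reaches every size down to 2; in particular, if `min(U) = C_{=k}`, then
`k • A ∈ min(U)` would lie above a minimal unstable configuration of size 2. -/

/-- Size of a configuration: total number of molecules. -/
def size {Λ : Type*} [Fintype Λ] (c : Λ → ℕ) : ℕ := ∑ i, c i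

/-- One reaction step of a CRN with reaction set `R`. -/
def Step {Λ : Type*} (R : Set ((Λ → ℕ) × (Λ → ℕ))) (c c' : Λ → ℕ) : Prop :=
  ∃ rp ∈ R, rp.1 ≤ c ∧ c' = c - rp.1 + rp.2

/-- Reachability: reflexive-transitive closure of one-step reactions. -/
def Reach {Λ : Type*} (R : Set ((Λ → ℕ) × (Λ → ℕ))) : (Λ → ℕ) → (Λ → ℕ) → Prop :=
  Relation.ReflTransGen (Step R)

open Classical in
/-- Output function Φ_D : `some true` = 1 (only yes voters present),
`some false` = 0 (only no voters present), `none` = und. -/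
noncomputable def Phi {Λ : Type*} (Υ : Λ → Bool) (x : Λ → ℕ) : Option Bool :=
  if (∃ A, x A ≠ 0 ∧ Υ A = true) ∧ ¬ (∃ A, x A ≠ 0 ∧ Υ A = false) then some true
  else if (∃ A, x A ≠ 0 ∧ Υ A = false) ∧ ¬ (∃ A, x A ≠ 0 ∧ Υ A = true) then some false
  else none

/-- Output stable configuration. -/
def OStable {Λ : Type*} (R : Set ((Λ → ℕ) × (Λ → ℕ))) (Υ : Λ → Bool) (c : Λ → ℕ) : Prop :=
  (Phi Υ c).isSome ∧ ∀ c', Reach R c c' → Phi Υ c' = Phi Υ c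

/-- Totally stable configuration. -/
def TStable {Λ : Type*} (R : Set ((Λ → ℕ) × (Λ → ℕ))) (Υ : Λ → Bool) (c : Λ → ℕ) : Prop :=
  (Phi Υ c).isSome ∧ ∀ c', Reach R c c' → c' = c

/-- Output unstable configuration: nonzero and not o-stable. -/
def Unstable {Λ : Type*} (R : Set ((Λ → ℕ) × (Λ → ℕ))) (Υ : Λ → Bool) (c : Λ → ℕ) : Prop :=
  c ≠ 0 ∧ ¬ OStable R Υ c

/-- The set U of output unstable configurations. -/
def UnstableSet {Λ : Type*} (R : Set ((Λ → ℕ) × (Λ → ℕ))) (Υ : Λ → Bool) : Set (Λ → ℕ) :=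
  {c | Unstable R Υ c}

/-- min(U): the ≤-minimal output unstable configurations. -/
def minU {Λ : Type*} (R : Set ((Λ → ℕ) × (Λ → ℕ))) (Υ : Λ → Bool) : Set (Λ → ℕ) :=
  {c | Unstable R Υ c ∧ ∀ c', Unstable R Υ c' → c' ≤ c → c' = c}

/-- The relation ↪ on min(U). -/
def Hook {Λ : Type*} (R : Set ((Λ → ℕ) × (Λ → ℕ))) (Υ : Λ → Bool) (c c' : Λ → ℕ) : Prop :=
  c ∈ minU R Υ ∧ c' ∈ minU R Υ ∧ ∃ rp ∈ R, ∃ b : Λ → ℕ,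
    b ≤ rp.2 ∧ b ≠ rp.2 ∧ rp.1 ≤ c ∧ c' + b = c - rp.1 + rp.2

/-- D = (Λ,R,Inp,Υ) is an o-stable CRD: it o-stably decides some function φ
on the initial configurations (nonzero, supported on the input species Inp). -/
def IsOStableCRD {Λ : Type*} (R : Set ((Λ → ℕ) × (Λ → ℕ))) (Inp : Set Λ) (Υ : Λ → Bool) : Prop :=
  ∃ φ : (Λ → ℕ) → Bool, ∀ c : Λ → ℕ, c ≠ 0 → (∀ A ∉ Inp, c A = 0) →
    ∀ c', Reach R c c' → ∃ c'', Reach R c' c'' ∧ OStable R Υ c'' ∧ Phi Υ c'' = some (φ c)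

section Output

variable {Λ : Type*} {R : Set ((Λ → ℕ) × (Λ → ℕ))} {Υ : Λ → Bool}

theorem phi_eq_some_iff {x : Λ → ℕ} {b : Bool} :
    Phi Υ x = some b ↔ x ≠ 0 ∧ ∀ A, x A ≠ 0 → Υ A = b := by
  have voters : ∀ b', (x ≠ 0 ∧ ∀ A, x A ≠ 0 → Υ A = b') ↔
      (∃ A, x A ≠ 0 ∧ Υ A = b') ∧ ¬ ∃ A, x A ≠ 0 ∧ Υ A = !b' := by
    intro b'
    rw [Function.ne_iff]
    constructor
    · rintro ⟨⟨A, hA⟩, h⟩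
      exact ⟨⟨A, hA, h A hA⟩, fun ⟨B, hB, hB'⟩ => by simp [h B hB] at hB'⟩
    · rintro ⟨⟨A, hA, -⟩, h⟩
      exact ⟨⟨A, hA⟩, fun B hB => by_contra fun hne => h ⟨B, hB, Bool.eq_not_iff.mpr hne⟩⟩
  rw [voters]
  by_cases hT : ∃ A, x A ≠ 0 ∧ Υ A = true <;> by_cases hF : ∃ A, x A ≠ 0 ∧ Υ A = false <;>
    cases b <;> simp [Phi, hT, hF]

theorem phi_eq_some_of_le {c d : Λ → ℕ} {b : Bool} (hcd : c ≤ d) (hc : c ≠ 0)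
    (hd : Phi Υ d = some b) : Phi Υ c = some b := by
  rw [phi_eq_some_iff] at hd ⊢
  exact ⟨hc, fun A hA => hd.2 A fun h => hA (Nat.eq_zero_of_le_zero (h ▸ hcd A))⟩

theorem phi_eq_none_of_ne {x : Λ → ℕ} {A B : Λ} (hA : x A ≠ 0) (hB : x B ≠ 0)
    (hAB : Υ A ≠ Υ B) : Phi Υ x = none :=
  Option.eq_none_iff_forall_ne_some.mpr fun _ hb =>
    hAB <| ((phi_eq_some_iff.mp hb).2 A hA).trans ((phi_eq_some_iff.mp hb).2 B hB).symm

theorem exists_ne_of_phi_eq_none {x : Λ → ℕ} (hx : x ≠ 0) (h : Phi Υ x = none) :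
    ∃ A B, x A ≠ 0 ∧ x B ≠ 0 ∧ Υ A ≠ Υ B := by
  obtain ⟨A, hA⟩ := Function.ne_iff.mp hx
  have hne : ¬ (x ≠ 0 ∧ ∀ B, x B ≠ 0 → Υ B = Υ A) := by
    rw [← phi_eq_some_iff, h]
    simp
  push Not at hne
  obtain ⟨B, hB, hBA⟩ := hne hx
  exact ⟨A, B, hA, hB, hBA.symm⟩

theorem unstable_of_phi_eq_none {x : Λ → ℕ} (hx : x ≠ 0) (h : Phi Υ x = none) :
    Unstable R Υ x :=
  ⟨hx, fun hO => by simpa [h] using hO.1⟩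

theorem unstable_of_reach_of_phi_ne {c c' : Λ → ℕ} (hc : c ≠ 0) (h : Reach R c c')
    (hne : Phi Υ c' ≠ Phi Υ c) : Unstable R Υ c :=
  ⟨hc, fun hO => hne (hO.2 c' h)⟩

theorem exists_reach_phi_ne_of_unstable {c : Λ → ℕ} (hc : Unstable R Υ c)
    (hsome : (Phi Υ c).isSome) : ∃ c', Reach R c c' ∧ Phi Υ c' ≠ Phi Υ c := by
  by_contra! h
  exact hc.2 ⟨hsome, h⟩

theorem unstable_of_reach {c c' : Λ → ℕ} (hc : c ≠ 0) (h : Reach R c c')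
    (hc' : Unstable R Υ c') : Unstable R Υ c := by
  refine ⟨hc, fun hO => hc'.2 ⟨?_, fun d hd => ?_⟩⟩
  · rw [hO.2 c' h]
    exact hO.1
  · rw [hO.2 d (h.trans hd), hO.2 c' h]

theorem step_add {c c' : Λ → ℕ} (h : Step R c c') (e : Λ → ℕ) :
    Step R (c + e) (c' + e) := by
  obtain ⟨rp, hrp, hle, rfl⟩ := h
  refine ⟨rp, hrp, hle.trans le_self_add, funext fun i => ?_⟩
  have hi : rp.1 i ≤ c i := hle i
  simp only [Pi.add_apply, Pi.sub_apply]
  omega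

theorem reach_add {c c' : Λ → ℕ} (h : Reach R c c') (e : Λ → ℕ) :
    Reach R (c + e) (c' + e) :=
  Relation.ReflTransGen.lift (· + e) (fun _ _ hs => step_add hs e) _ _ h

theorem mem_minU_iff_minimal {c : Λ → ℕ} : c ∈ minU R Υ ↔ Minimal (Unstable R Υ) c :=
  and_congr_right fun _ =>
    forall_congr' fun _ => imp_congr_right fun _ => imp_congr_right fun hdc =>
      ⟨fun h => (h.symm).le, fun h => le_antisymm hdc h⟩

theorem exists_mem_minU_le [Finite Λ] {c : Λ → ℕ} (hc : Unstable R Υ c) :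
    ∃ z ∈ minU R Υ, z ≤ c := by
  obtain ⟨z, hzc, hz⟩ := exists_minimal_le_of_wellFoundedLT _ c hc
  exact ⟨z, mem_minU_iff_minimal.mpr hz, hzc⟩

end Output

section Size

variable {Λ : Type*} [Fintype Λ]

theorem size_add (c d : Λ → ℕ) : size (c + d) = size c + size d :=
  Finset.sum_add_distrib

theorem size_single [DecidableEq Λ] (A : Λ) (n : ℕ) : size (Pi.single A n) = n := by
  simp [size, Finset.sum_pi_single']

theorem size_mono : Monotone (size : (Λ → ℕ) → ℕ) :=
  fun _ _ h => Finset.sum_le_sum fun i _ => h i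

theorem size_strictMono : StrictMono (size : (Λ → ℕ) → ℕ) := fun c d h => by
  obtain ⟨i, hi⟩ := Pi.lt_def.mp h |>.2
  exact Finset.sum_lt_sum (fun j _ => h.le j) ⟨i, Finset.mem_univ i, hi⟩

theorem eq_of_le_of_size_le {c d : Λ → ℕ} (h : c ≤ d) (hs : size d ≤ size c) : c = d :=
  h.lt_or_eq.resolve_left fun hlt => (size_strictMono hlt).not_ge hs

theorem size_eq_zero_iff {c : Λ → ℕ} : size c = 0 ↔ c = 0 := by
  simp [size, Finset.sum_eq_zero_iff, funext_iff]

theorem size_sub_add_size {c r : Λ → ℕ} (h : r ≤ c) : size (c - r) + size r = size c := by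
  rw [← size_add, tsub_add_cancel_of_le h]

end Size

def IsConservative {Λ : Type*} [Fintype Λ] (R : Set ((Λ → ℕ) × (Λ → ℕ))) : Prop :=
  ∀ rp ∈ R, size rp.1 = size rp.2

def IsBimolecular {Λ : Type*} [Fintype Λ] (R : Set ((Λ → ℕ) × (Λ → ℕ))) : Prop :=
  ∀ rp ∈ R, size rp.1 = 2 ∧ size rp.2 = 2

section Conservative

variable {Λ : Type*} [Fintype Λ] {R : Set ((Λ → ℕ) × (Λ → ℕ))} {Υ : Λ → Bool}

theorem IsBimolecular.isConservative (hR : IsBimolecular R) : IsConservative R :=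
  fun rp hrp => (hR rp hrp).1.trans (hR rp hrp).2.symm

theorem IsConservative.size_eq_of_step (hR : IsConservative R) {c c' : Λ → ℕ}
    (h : Step R c c') : size c' = size c := by
  obtain ⟨rp, hrp, hle, rfl⟩ := h
  rw [size_add, ← hR rp hrp, size_sub_add_size hle]

theorem IsConservative.size_eq_of_reach (hR : IsConservative R) {c c' : Λ → ℕ}
    (h : Reach R c c') : size c' = size c := by
  induction h with
  | refl => rfl
  | tail _ hs ih => rw [hR.size_eq_of_step hs, ih]

theorem IsConservative.ne_zero_of_reach (hR : IsConservative R) {c c' : Λ → ℕ}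
    (h : Reach R c c') (hc : c ≠ 0) : c' ≠ 0 :=
  fun h0 => hc <| size_eq_zero_iff.mp <|
    (hR.size_eq_of_reach h).symm.trans (size_eq_zero_iff.mpr h0)

theorem IsConservative.unstable_of_le (hR : IsConservative R) {c d : Λ → ℕ}
    (hc : Unstable R Υ c) (hcd : c ≤ d) : Unstable R Υ d := by
  have hd : d ≠ 0 := fun h => hc.1 (le_antisymm (h ▸ hcd) bot_le)
  refine ⟨hd, fun hO => ?_⟩
  obtain ⟨b, hb⟩ := Option.isSome_iff_exists.mp hO.1
  refine hc.2 ⟨?_, fun c' hc' => ?_⟩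
  · simp [phi_eq_some_of_le hcd hc.1 hb]
  · -- the molecules of `d - c` are spectators of a run from `c`
    have hrun : Reach R d (c' + (d - c)) := by
      simpa [add_tsub_cancel_of_le hcd] using reach_add hc' (d - c)
    rw [phi_eq_some_of_le hcd hc.1 hb]
    exact phi_eq_some_of_le le_self_add (hR.ne_zero_of_reach hc' hc.1) ((hO.2 _ hrun).trans hb)

end Conservative

section Bimolecular

variable {Λ : Type*} [Fintype Λ] {R : Set ((Λ → ℕ) × (Λ → ℕ))} {Υ : Λ → Bool}

theorem exists_unstable_le_size_two {x : Λ → ℕ} (hx : x ≠ 0) (h : Phi Υ x = none) :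
    ∃ y ≤ x, Unstable R Υ y ∧ size y = 2 := by
  classical
  obtain ⟨A, B, hA, hB, hAB⟩ := exists_ne_of_phi_eq_none hx h
  have hne : A ≠ B := fun h => hAB (h ▸ rfl)
  set y : Λ → ℕ := Pi.single A 1 + Pi.single B 1
  have hyA : y A ≠ 0 := by simp [y]
  have hyB : y B ≠ 0 := by simp [y]
  refine ⟨y, fun i => ?_, unstable_of_phi_eq_none (Function.ne_iff.mpr ⟨A, hyA⟩)
    (phi_eq_none_of_ne hyA hyB hAB), by simp only [y, size_add, size_single]⟩
  by_cases hiA : i = A <;> by_cases hiB : i = B <;> simp_all [y] <;> omega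

theorem isSome_phi_of_mem_minU {x : Λ → ℕ} (hx : x ∈ minU R Υ) (h3 : 3 ≤ size x) :
    (Phi Υ x).isSome := by
  rw [Option.isSome_iff_ne_none]
  intro hphi
  obtain ⟨y, hyx, hy, hy2⟩ := exists_unstable_le_size_two hx.1.1 hphi
  rw [hx.2 y hy hyx] at hy2
  omega

theorem IsBimolecular.phi_step_eq_or_eq_none (hR : IsBimolecular R) {a c : Λ → ℕ} {b : Bool}
    (h3 : 3 ≤ size a) (hs : Step R a c) (hb : Phi Υ a = some b) :
    Phi Υ c = some b ∨ Phi Υ c = none := by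
  obtain ⟨rp, hrp, hle, rfl⟩ := hs
  cases hc : Phi Υ (a - rp.1 + rp.2) with
  | none => exact Or.inr rfl
  | some b' =>
    -- the molecules of `a` not consumed by the reaction are shared by `a` and its successor
    have hrest : a - rp.1 ≠ 0 := by
      intro h0
      have := size_sub_add_size hle
      rw [h0, (hR rp hrp).1, size_eq_zero_iff.mpr rfl] at this
      omega
    have h₁ := phi_eq_some_of_le tsub_le_self hrest hb
    rw [phi_eq_some_of_le le_self_add hrest hc] at h₁
    exact Or.inl h₁

theorem IsBimolecular.size_sub_one_le_of_step (hR : IsBimolecular R) {a c z : Λ → ℕ}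
    (ha : a ∈ minU R Υ) (hs : Step R a c) (hz : z ∈ minU R Υ) (hzc : z ≤ c) :
    size a - 1 ≤ size z := by
  obtain ⟨⟨r, p⟩, hrp, hra, rfl⟩ := hs
  obtain ⟨hr, -⟩ := hR (r, p) hrp
  -- `w` is the configuration from which the reaction `r → p` produces a superset of `z`
  set w := z - p + r
  have hwa : w ≤ a := fun i => by
    have h₁ := hzc i
    have h₂ : r i ≤ a i := hra i
    simp only [w, Pi.add_apply, Pi.sub_apply] at h₁ ⊢
    omega
  have hw0 : w ≠ 0 := fun h0 => by
    have := size_mono (le_add_self.trans h0.le : r ≤ 0)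
    rw [size_eq_zero_iff.mpr rfl, hr] at this
    omega
  have hzw : z ≤ w - r + p := fun i => by
    simp only [w, Pi.add_apply, Pi.sub_apply]
    omega
  have hstep : Step R w (w - r + p) := ⟨(r, p), hrp, le_add_self, rfl⟩
  have hwu : Unstable R Υ w := unstable_of_reach hw0 (.single hstep)
    (hR.isConservative.unstable_of_le hz.1 hzw)
  have hwa' : w = a := ha.2 w hwu hwa
  have hsize : size a = size (z - p) + 2 := by rw [← hwa', size_add, hr]
  rcases (tsub_le_self : z - p ≤ z).lt_or_eq with hlt | heq
  · have := size_strictMono hlt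
    omega
  · -- then `z ≤ z + r = a`, so minimality of `a` forces `z = a`, although `‖a‖ = ‖z‖ + 2`
    have hza : z = a := ha.2 z hz.1 ((heq.symm.le.trans le_self_add).trans hwa)
    rw [← hza, heq] at hsize
    omega

theorem IsBimolecular.mem_minU_or_exists_size_sub_one (hR : IsBimolecular R) {a c : Λ → ℕ}
    (ha : a ∈ minU R Υ) (hs : Step R a c) (hc : Unstable R Υ c) :
    c ∈ minU R Υ ∨ ∃ z ∈ minU R Υ, size z = size a - 1 := by
  obtain ⟨z, hz, hzc⟩ := exists_mem_minU_le hc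
  have hsize := hR.isConservative.size_eq_of_step hs
  have hlow := hR.size_sub_one_le_of_step ha hs hz hzc
  have hhigh : size z ≤ size a := hsize ▸ size_mono hzc
  by_cases hza : size z = size a
  · left
    rwa [← eq_of_le_of_size_le hzc (hsize ▸ hza.ge)]
  · exact Or.inr ⟨z, hz, by omega⟩

theorem IsBimolecular.exists_size_sub_one_of_reach (hR : IsBimolecular R) {a c : Λ → ℕ}
    {b : Bool} (h : Reach R a c) (hc : Phi Υ c ≠ some b) (ha : a ∈ minU R Υ)
    (h3 : 3 ≤ size a) (hb : Phi Υ a = some b) : ∃ z ∈ minU R Υ, size z = size a - 1 := by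
  induction h using Relation.ReflTransGen.head_induction_on with
  | refl => exact absurd hb hc
  | @head a a' hs hrest ih =>
    have hsize := hR.isConservative.size_eq_of_step hs
    have ha' : a' ≠ 0 := hR.isConservative.ne_zero_of_reach (.single hs) ha.1.1
    have hphi := hR.phi_step_eq_or_eq_none h3 hs hb
    have hunst : Unstable R Υ a' := by
      rcases hphi with hb' | hnone
      · exact unstable_of_reach_of_phi_ne ha' hrest (hb' ▸ hc)
      · exact unstable_of_phi_eq_none ha' hnone
    obtain hmin | hdone := hR.mem_minU_or_exists_size_sub_one ha hs hunst
    · have h3' : 3 ≤ size a' := hsize ▸ h3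
      have hb' : Phi Υ a' = some b :=
        hphi.resolve_right (Option.isSome_iff_ne_none.mp (isSome_phi_of_mem_minU hmin h3'))
      exact hsize ▸ ih hmin h3' hb'
    · exact hdone

theorem IsBimolecular.exists_mem_minU_size_sub_one (hR : IsBimolecular R) {x : Λ → ℕ}
    (hx : x ∈ minU R Υ) (h3 : 3 ≤ size x) : ∃ z ∈ minU R Υ, size z = size x - 1 := by
  obtain ⟨b, hb⟩ := Option.isSome_iff_exists.mp (isSome_phi_of_mem_minU hx h3)
  obtain ⟨c, hxc, hc⟩ := exists_reach_phi_ne_of_unstable hx.1 (by simp [hb])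
  exact hR.exists_size_sub_one_of_reach hxc (hb ▸ hc) hx h3 hb

theorem IsBimolecular.exists_mem_minU_size_eq (hR : IsBimolecular R) {x : Λ → ℕ}
    (hx : x ∈ minU R Υ) {l : ℕ} (hl : 2 ≤ l) (hlx : l ≤ size x) :
    ∃ y ∈ minU R Υ, size y = l := by
  obtain ⟨n, hn⟩ := Nat.exists_eq_add_of_le hlx
  induction n generalizing x with
  | zero => exact ⟨x, hx, hn⟩
  | succ n ih =>
    obtain ⟨z, hz, hzs⟩ := hR.exists_mem_minU_size_sub_one hx (by omega)
    exact ih hz (by omega) (by omega)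

end Bimolecular

theorem stmt15_general {Λ : Type*} [Fintype Λ] [Nonempty Λ] (R : Set ((Λ → ℕ) × (Λ → ℕ)))
    (Υ : Λ → Bool) (hbi : ∀ rp ∈ R, size rp.1 = 2 ∧ size rp.2 = 2) :
    (∀ x ∈ minU R Υ, ∀ l, 2 ≤ l → l ≤ size x → ∃ y ∈ minU R Υ, size y = l) ∧
      ∀ k, 3 ≤ k → minU R Υ ≠ {c : Λ → ℕ | size c = k} := by
  have hR : IsBimolecular R := hbi
  refine ⟨fun x hx l hl hlx => hR.exists_mem_minU_size_eq hx hl hlx, fun k hk heq => ?_⟩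
  classical
  obtain ⟨A⟩ := ‹Nonempty Λ›
  have hA : Pi.single A k ∈ minU R Υ := by
    rw [heq]
    exact size_single A k
  obtain ⟨y, hy, hy2⟩ := hR.exists_mem_minU_size_eq hA le_rfl (by rw [size_single]; omega)
  have hyk : size y = k := by rwa [heq] at hy
  omega

/-- for an o-stable bimolecular CRD, min(U) contains elements of every
size l with 2 ≤ l ≤ k whenever it contains one of size k; consequently min(U) is not
the full antichain of configurations of any fixed size k ≥ 3. -/
theorem stmt15 {Λ : Type*} [Fintype Λ] [Nonempty Λ] (R : Set ((Λ → ℕ) × (Λ → ℕ)))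
    (Inp : Set Λ) (Υ : Λ → Bool) (hD : IsOStableCRD R Inp Υ)
    (hbi : ∀ rp ∈ R, size rp.1 = 2 ∧ size rp.2 = 2) :
    (∀ x ∈ minU R Υ, ∀ l, 2 ≤ l → l ≤ size x → ∃ y ∈ minU R Υ, size y = l) ∧
      ∀ k, 3 ≤ k → minU R Υ ≠ {c : Λ → ℕ | size c = k} :=
  stmt15_general R Υ hbi
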